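/- For N = pq with p, q distinct primes and α a unit mod N, the number of cycles in the graph G_{N,α} (vertices 1,…,N−1, edges i→αi mod N) equals (q−1)/|orb(p)| + (p−1)/|orb(q)| + (p−1)(q−1)/lcm(|orb(p)|,|orb(q)|), where orb(x) denotes the orbit of x in Z/NZ under multiplication by α. -/

import Mathlib

/-!
By the Chinese remainder theorem, multiplication by `α` on `ZMod (p * q)` is conjugate to
`(x, y) ↦ (a x, b y)` on `ZMod p × ZMod q`, where `(a, b)` is the image of `α`. The nonzero
points split into three invariant classes according to which coordinate vanishes. The cycle
through a point has length its minimal period, the lcm of the periods of its coordinates, which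
are `1` at a zero coordinate and `orderOf a` (resp. `orderOf b`) elsewhere. So all cycles in a
class have the same length, and their number is the size of the class divided by that length.
Finally `p ↦ (0, p)` and `q ↦ (q, 0)`, so `|orb p| = orderOf b` and `|orb q| = orderOf a`.
-/

theorem Set.ncard_eq_ncard_image_mul {α β : Type*} (g : α → β) {X : Set α}
    (hX : X.Finite) {d : ℕ} (hfiber : ∀ x ∈ X, {y ∈ X | g y = g x}.ncard = d) :
    X.ncard = (g '' X).ncard * d := by
  classical
  lift X to Finset α using hX
  rw [← Finset.coe_image, Set.ncard_coe_finset, Set.ncard_coe_finset,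
    Finset.card_eq_sum_card_image g X, Finset.sum_const_nat]
  rintro _ hb
  obtain ⟨x, hx, rfl⟩ := Finset.mem_image.mp hb
  simpa [← Set.ncard_coe_finset] using hfiber x hx

namespace Function

variable {α β : Type*}

def forwardOrbit (f : α → α) (x : α) : Set α := Set.range fun n => f^[n] x

section
variable {f : α → α} {x y : α}

theorem mem_forwardOrbit_self : x ∈ forwardOrbit f x := ⟨0, rfl⟩

theorem forwardOrbit_subset_of_mem (hy : y ∈ forwardOrbit f x) :
    forwardOrbit f y ⊆ forwardOrbit f x := by
  obtain ⟨k, rfl⟩ := hy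
  rintro _ ⟨n, rfl⟩
  exact ⟨n + k, iterate_add_apply f n k x⟩

theorem forwardOrbit_eq_of_mem (hx : x ∈ periodicPts f) (hy : y ∈ forwardOrbit f x) :
    forwardOrbit f y = forwardOrbit f x := by
  refine (forwardOrbit_subset_of_mem hy).antisymm (forwardOrbit_subset_of_mem ?_)
  obtain ⟨k, rfl⟩ := hy
  -- `x` returns to itself after `k * minimalPeriod f x ≥ k` steps
  refine ⟨k * minimalPeriod f x - k, ?_⟩
  show f^[_] (f^[k] x) = x
  rw [← iterate_add_apply, Nat.sub_add_cancel (Nat.le_mul_of_pos_right k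
    (minimalPeriod_pos_of_mem_periodicPts hx))]
  exact ((isPeriodicPt_minimalPeriod f x).const_mul k).eq

theorem ncard_forwardOrbit (hx : x ∈ periodicPts f) :
    (forwardOrbit f x).ncard = minimalPeriod f x := by
  have : forwardOrbit f x = (f^[·] x) '' Set.Iio (minimalPeriod f x) := by
    refine (Set.image_subset_range _ _).antisymm' ?_
    rintro _ ⟨n, rfl⟩
    exact ⟨n % minimalPeriod f x, Nat.mod_lt _ (minimalPeriod_pos_of_mem_periodicPts hx),
      iterate_mod_minimalPeriod_eq⟩
  rw [this, iterate_injOn_Iio_minimalPeriod.ncard_image, ← Finset.coe_Iio,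
    Set.ncard_coe_finset, Nat.card_Iio]

theorem _root_.Set.MapsTo.forwardOrbit_subset {X : Set α} (hX : Set.MapsTo f X X) (hx : x ∈ X) :
    forwardOrbit f x ⊆ X := by
  rintro _ ⟨n, rfl⟩
  exact hX.iterate n hx

theorem Semiconj.image_forwardOrbit {e : α → β} {g : β → β} (h : Semiconj e f g) :
    e '' forwardOrbit f x = forwardOrbit g (e x) := by
  rw [forwardOrbit, ← Set.range_comp]
  exact congrArg Set.range (funext fun n => (h.iterate_right n).eq x)

theorem disjoint_image_forwardOrbit {X Y : Set α} (hX : Set.MapsTo f X X)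
    (hXY : Disjoint X Y) : Disjoint (forwardOrbit f '' X) (forwardOrbit f '' Y) := by
  rw [Set.disjoint_left]
  rintro _ ⟨x, hx, rfl⟩ ⟨y, hy, hyx⟩
  exact Set.disjoint_left.mp hXY (hX.forwardOrbit_subset hx (hyx ▸ mem_forwardOrbit_self)) hy

theorem Semiconj.ncard_image_forwardOrbit {e : α → β} {g : β → β} (h : Semiconj e f g)
    (he : Injective e) (X : Set α) :
    (forwardOrbit f '' X).ncard = (forwardOrbit g '' (e '' X)).ncard := by
  rw [← Set.ncard_image_of_injective _ (Set.image_injective.mpr he), Set.image_image,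
    Set.image_image]
  simp_rw [h.image_forwardOrbit]

theorem Semiconj.ncard_forwardOrbit [Finite β] {e : α → β} {g : β → β} (h : Semiconj e f g)
    (he : Injective e) (hg : Injective g) : (forwardOrbit f x).ncard = minimalPeriod g (e x) := by
  rw [← Set.ncard_image_of_injective _ he, h.image_forwardOrbit,
    Function.ncard_forwardOrbit (hg.mem_periodicPts _)]

variable [Finite α]

theorem ncard_image_forwardOrbit_mul (hf : Injective f) {X : Set α} (hX : Set.MapsTo f X X)
    {d : ℕ} (hd : ∀ x ∈ X, minimalPeriod f x = d) :
    (forwardOrbit f '' X).ncard * d = X.ncard := by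
  refine (Set.ncard_eq_ncard_image_mul _ X.toFinite fun x hx => ?_).symm
  have hfiber : {y ∈ X | forwardOrbit f y = forwardOrbit f x} = forwardOrbit f x := by
    ext y
    refine ⟨fun ⟨_, hy⟩ => hy ▸ mem_forwardOrbit_self, fun hy => ?_⟩
    exact ⟨hX.forwardOrbit_subset hx hy, forwardOrbit_eq_of_mem (hf.mem_periodicPts x) hy⟩
  rw [hfiber, ncard_forwardOrbit (hf.mem_periodicPts x), hd x hx]

theorem ncard_image_forwardOrbit_prodMap_mul [Finite β] {g : β → β} (hf : Injective f)
    (hg : Injective g) {S : Set α} {T : Set β} (hS : Set.MapsTo f S S) (hT : Set.MapsTo g T T)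
    {d₁ d₂ : ℕ} (hd₁ : ∀ x ∈ S, minimalPeriod f x = d₁) (hd₂ : ∀ y ∈ T, minimalPeriod g y = d₂) :
    (forwardOrbit (Prod.map f g) '' (S ×ˢ T)).ncard * Nat.lcm d₁ d₂ = S.ncard * T.ncard := by
  rw [← Set.ncard_prod]
  refine ncard_image_forwardOrbit_mul (hf.prodMap hg) (hS.prodMap hT) fun z hz => ?_
  rw [minimalPeriod_prodMap, hd₁ _ hz.1, hd₂ _ hz.2]

theorem ncard_image_forwardOrbit_prodMap_compl_zero [Finite β] [Zero α] [Zero β] {g : β → β}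
    (hf₀ : f 0 = 0) (hg₀ : g 0 = 0) (hf : Set.MapsTo f {0}ᶜ {0}ᶜ) (hg : Set.MapsTo g {0}ᶜ {0}ᶜ) :
    (forwardOrbit (Prod.map f g) '' {0}ᶜ).ncard =
      (forwardOrbit (Prod.map f g) '' ({0} ×ˢ {0}ᶜ)).ncard
        + (forwardOrbit (Prod.map f g) '' ({0}ᶜ ×ˢ {0})).ncard
        + (forwardOrbit (Prod.map f g) '' ({0}ᶜ ×ˢ {0}ᶜ)).ncard := by
  have hclasses : ({0}ᶜ : Set (α × β)) = {0} ×ˢ {0}ᶜ ∪ {0}ᶜ ×ˢ {0} ∪ {0}ᶜ ×ˢ {0}ᶜ := by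
    ext ⟨x, y⟩
    simp only [Set.mem_compl_iff, Set.mem_singleton_iff, Prod.mk_eq_zero, Set.mem_union,
      Set.mem_prod]
    tauto
  have hA : Set.MapsTo (Prod.map f g) ({0} ×ˢ {0}ᶜ) ({0} ×ˢ {0}ᶜ) :=
    Set.MapsTo.prodMap (Set.mapsTo_singleton.mpr hf₀ : Set.MapsTo f {0} {0}) hg
  have hB : Set.MapsTo (Prod.map f g) ({0}ᶜ ×ˢ {0}) ({0}ᶜ ×ˢ {0}) :=
    hf.prodMap (Set.mapsTo_singleton.mpr hg₀ : Set.MapsTo g {0} {0})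
  rw [hclasses, Set.image_union, Set.image_union, Set.ncard_union_eq, Set.ncard_union_eq]
  · exact disjoint_image_forwardOrbit hA (Set.disjoint_prod.mpr (.inl disjoint_compl_right))
  · exact .union_left
      (disjoint_image_forwardOrbit hA (Set.disjoint_prod.mpr (.inl disjoint_compl_right)))
      (disjoint_image_forwardOrbit hB (Set.disjoint_prod.mpr (.inr disjoint_compl_right)))

end

theorem forwardOrbit_mul_left {M : Type*} [Monoid M] (a x : M) :
    forwardOrbit (a * ·) x = {y | ∃ k : ℕ, a ^ k * x = y} := by
  simp only [forwardOrbit, mul_left_iterate_apply]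
  rfl

section MonoidWithZero
variable {M₀ : Type*} [MonoidWithZero M₀]

theorem minimalPeriod_mul_left_zero (a : M₀) : minimalPeriod (a * ·) 0 = 1 :=
  minimalPeriod_eq_one_iff_isFixedPt.mpr (mul_zero a)

theorem minimalPeriod_mul_left_of_ne_zero [IsRightCancelMulZero M₀] (a : M₀) {x : M₀}
    (hx : x ≠ 0) : minimalPeriod (a * ·) x = orderOf a :=
  minimalPeriod_eq_minimalPeriod_iff.mpr fun n => by
    rw [isPeriodicPt_mul_iff_pow_eq_one, IsPeriodicPt, IsFixedPt, mul_left_iterate_apply,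
      mul_eq_right₀ hx]

theorem mapsTo_mul_left_compl_zero [NoZeroDivisors M₀] {a : M₀} (ha : a ≠ 0) :
    Set.MapsTo (a * ·) {0}ᶜ {0}ᶜ :=
  fun _ hx => mul_ne_zero ha hx

end MonoidWithZero

theorem ncard_image_forwardOrbit_mul_left_compl_zero {K L : Type*} [GroupWithZero K]
    [GroupWithZero L] [Finite K] [Finite L] {a : K} {b : L} (ha : a ≠ 0) (hb : b ≠ 0) :
    (forwardOrbit (Prod.map (a * ·) (b * ·)) '' {0}ᶜ).ncard =
      (Nat.card L - 1) / orderOf b + (Nat.card K - 1) / orderOf a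
        + (Nat.card K - 1) * (Nat.card L - 1) / Nat.lcm (orderOf b) (orderOf a) := by
  have hfa := mul_right_injective₀ ha
  have hfb := mul_right_injective₀ hb
  have h0a : Set.MapsTo (a * ·) {0} {0} := Set.mapsTo_singleton.mpr (mul_zero a)
  have h0b : Set.MapsTo (b * ·) {0} {0} := Set.mapsTo_singleton.mpr (mul_zero b)
  have hua := mapsTo_mul_left_compl_zero ha
  have hub := mapsTo_mul_left_compl_zero hb
  have hpa : ∀ x ∈ ({0}ᶜ : Set K), minimalPeriod (a * ·) x = orderOf a :=
    fun _ hx => minimalPeriod_mul_left_of_ne_zero a hx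
  have hpb : ∀ y ∈ ({0}ᶜ : Set L), minimalPeriod (b * ·) y = orderOf b :=
    fun _ hy => minimalPeriod_mul_left_of_ne_zero b hy
  have hA := ncard_image_forwardOrbit_prodMap_mul hfa hfb h0a hub
    (fun _ hx => hx ▸ minimalPeriod_mul_left_zero a) hpb
  have hB := ncard_image_forwardOrbit_prodMap_mul hfa hfb hua h0b
    hpa (fun _ hy => hy ▸ minimalPeriod_mul_left_zero b)
  have hC := ncard_image_forwardOrbit_prodMap_mul hfa hfb hua hub hpa hpb
  have hK : ({0}ᶜ : Set K).ncard = Nat.card K - 1 := by rw [Set.ncard_compl, Set.ncard_singleton]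
  have hL : ({0}ᶜ : Set L).ncard = Nat.card L - 1 := by rw [Set.ncard_compl, Set.ncard_singleton]
  simp only [hK, hL, Set.ncard_singleton, Nat.lcm_one_left, Nat.lcm_one_right, one_mul,
    mul_one] at hA hB hC
  have hda : orderOf a ≠ 0 := (orderOf_pos_iff.mpr ha.isUnit.isOfFinOrder).ne'
  have hdb : orderOf b ≠ 0 := (orderOf_pos_iff.mpr hb.isUnit.isOfFinOrder).ne'
  rw [ncard_image_forwardOrbit_prodMap_compl_zero (mul_zero a) (mul_zero b) hua hub,
    ← Nat.eq_div_of_mul_eq_left hdb hA, ← Nat.eq_div_of_mul_eq_left hda hB, Nat.lcm_comm,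
    ← Nat.eq_div_of_mul_eq_left (Nat.lcm_ne_zero hda hdb) hC]

end Function

open Function

/-- For `N = p*q` with `p, q` distinct primes and `α` a unit mod `N`, the number of
cycles of the graph `G_{N,α}` (i.e. orbits of multiplication by `α` on the nonzero
residues) equals
`(q-1)/|orb(p)| + (p-1)/|orb(q)| + (p-1)(q-1)/lcm(|orb(p)|,|orb(q)|)`. -/
theorem num_cycles_of_mul_graph (p q : ℕ) (hp : p.Prime) (hq : q.Prime) (hpq : p ≠ q)
    (α : (ZMod (p * q))ˣ) :
    Set.ncard {S : Set (ZMod (p * q)) | ∃ x : ZMod (p * q), x ≠ 0 ∧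
        S = {y | ∃ k : ℕ, (α : ZMod (p * q)) ^ k * x = y}} =
      (q - 1) / Set.ncard {y : ZMod (p * q) | ∃ k : ℕ, (α : ZMod (p * q)) ^ k * (p : ZMod (p * q)) = y}
      + (p - 1) / Set.ncard {y : ZMod (p * q) | ∃ k : ℕ, (α : ZMod (p * q)) ^ k * (q : ZMod (p * q)) = y}
      + (p - 1) * (q - 1) / Nat.lcm
          (Set.ncard {y : ZMod (p * q) | ∃ k : ℕ, (α : ZMod (p * q)) ^ k * (p : ZMod (p * q)) = y})
          (Set.ncard {y : ZMod (p * q) | ∃ k : ℕ, (α : ZMod (p * q)) ^ k * (q : ZMod (p * q)) = y}) := by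
  have := Fact.mk hp
  have := Fact.mk hq
  set u : ZMod (p * q) := ↑α
  let e := ZMod.chineseRemainder ((Nat.coprime_primes hp hq).mpr hpq)
  obtain ⟨ha, hb⟩ := Prod.isUnit_iff.mp (α.isUnit.map e)
  set a := (e u).1
  set b := (e u).2
  have he : Semiconj e (u * ·) (Prod.map (a * ·) (b * ·)) := fun x => map_mul e u x
  have hcycles : {S | ∃ x, x ≠ 0 ∧ S = {y | ∃ k : ℕ, u ^ k * x = y}} =
      forwardOrbit (u * ·) '' {0}ᶜ := by
    ext S
    simp only [forwardOrbit_mul_left, Set.mem_image, Set.mem_compl_singleton_iff]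
    exact exists_congr fun x => and_congr_right' eq_comm
  have horbit (x : ZMod (p * q)) : {y | ∃ k : ℕ, u ^ k * x = y}.ncard =
      Nat.lcm (minimalPeriod (a * ·) (e x).1) (minimalPeriod (b * ·) (e x).2) := by
    rw [← forwardOrbit_mul_left, he.ncard_forwardOrbit e.injective
      ((mul_right_injective₀ ha.ne_zero).prodMap (mul_right_injective₀ hb.ne_zero)),
      minimalPeriod_prodMap]
  have hp' : e p = (0, (p : ZMod q)) := by
    rw [map_natCast]; ext <;> simp
  have hq' : e q = ((q : ZMod p), 0) := by
    rw [map_natCast]; ext <;> simp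
  have hp0 : (p : ZMod q) ≠ 0 :=
    (ZMod.natCast_eq_zero_iff p q).not.mpr ((Nat.prime_dvd_prime_iff_eq hq hp).not.mpr hpq.symm)
  have hq0 : (q : ZMod p) ≠ 0 :=
    (ZMod.natCast_eq_zero_iff q p).not.mpr ((Nat.prime_dvd_prime_iff_eq hp hq).not.mpr hpq)
  rw [hcycles, horbit, horbit, hp', hq', minimalPeriod_mul_left_zero, minimalPeriod_mul_left_zero,
    minimalPeriod_mul_left_of_ne_zero _ hp0, minimalPeriod_mul_left_of_ne_zero _ hq0,
    Nat.lcm_one_left, Nat.lcm_one_right, he.ncard_image_forwardOrbit e.injective,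
    Set.image_compl_eq e.bijective, Set.image_singleton, map_zero,
    ncard_image_forwardOrbit_mul_left_compl_zero ha.ne_zero hb.ne_zero, Nat.card_zmod,
    Nat.card_zmod]
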